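/- (Lemma 3) For every fixed d with d > L, the function θ ↦ f(d, θ) is strictly decreasing on the interval [arccos(L/d), π/2], and it has a unique global maximizer θ° over θ ∈ [0, π/2], which lies in the closed interval [0, arccos(L/d)]; moreover G(arccos(L/d)) = 0, where G(θ) = (L² + d²)·cos θ − d·L·(1 + cos² θ). -/

import Mathlib

/-- Distance from the UAV (at polar coordinates `(d, θ)` relative to Willie) to Bob. -/
noncomputable def db (L d θ : ℝ) : ℝ :=
  Real.sqrt (L ^ 2 + d ^ 2 - 2 * d * L * Real.cos θ)

/-- Elevation angle from Bob to the UAV (in radians). -/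
noncomputable def θb (L d θ : ℝ) : ℝ :=
  Real.arcsin (d * Real.sin θ / db L d θ)

/-- Probability of a LoS component in the UAV-to-Bob channel. -/
noncomputable def pb (a b L d θ : ℝ) : ℝ :=
  1 / (1 + a * Real.exp (-b * ((180 / Real.pi) * θb L d θ - a)))

/-- The objective `f(d, θ) = d_b^{ξ_L} · p_b`. -/
noncomputable def f (a b L ξL d θ : ℝ) : ℝ :=
  db L d θ ^ ξL * pb a b L d θ

/-- The function `G(θ) = (L² + d²)·cos θ − d·L·(1 + cos² θ)`. -/
noncomputable def Gfun (L d θ : ℝ) : ℝ :=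
  (L ^ 2 + d ^ 2) * Real.cos θ - d * L * (1 + Real.cos θ ^ 2)

/-!
Write `T = arccos (L / d)`. By the law of sines `sin θb = d sin θ / d_b`, and
`d_b² = (d sin θ)² + (d cos θ − L)²`; comparing `sin² θb` at two angles factors through
`G(θ) = (d cos θ − L)(d − L cos θ)`, so `θb` increases on `[0, T]` and decreases on `[T, π/2]`.
Since `d_b` increases with `θ` and `p_b` is an increasing logistic function of `θb`, `f`
decreases on `[T, π/2]`. On `(0, T)`, `θb = arctan (d sin θ / (d cos θ − L))` and
`f' = f · θb' · D` with `θb' > 0` and `D = b (180/π) (1 − p_b) + ξ_L L sin θ / (d − L cos θ)`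
strictly decreasing, so `f` first increases and then decreases on `[0, T]`; its turning point
is the unique maximizer.
-/

open Real Set

theorem exists_strictMonoOn_strictAntiOn_of_hasDerivAt {g p D : ℝ → ℝ} {a b : ℝ} (hab : a ≤ b)
    (hg : ContinuousOn g (Icc a b)) (hp : ∀ x ∈ Ioo a b, 0 < p x)
    (hD : StrictAntiOn D (Ioo a b)) (hg' : ∀ x ∈ Ioo a b, HasDerivAt g (p x * D x) x) :
    ∃ c ∈ Icc a b, StrictMonoOn g (Icc a c) ∧ StrictAntiOn g (Icc c b) := by
  set S := insert a {x ∈ Ioo a b | 0 < D x}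
  have hSb : ∀ x ∈ S, x ≤ b := by rintro x (rfl | hx); exacts [hab, hx.1.2.le]
  have hS : BddAbove S := ⟨b, hSb⟩
  have hSne : S.Nonempty := ⟨a, mem_insert a _⟩
  have hac : a ≤ sSup S := le_csSup hS (mem_insert a _)
  have hcb : sSup S ≤ b := csSup_le hSne hSb
  have hpos : ∀ x ∈ Ioo a (sSup S), 0 < D x := by
    intro x hx
    obtain ⟨y, hyS, hxy⟩ := (lt_csSup_iff hS hSne).1 hx.2
    rcases hyS with rfl | hy
    · exact absurd hx.1 hxy.not_gt
    · exact hy.2.trans (hD ⟨hx.1, hxy.trans hy.1.2⟩ hy.1 hxy)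
  have hneg : ∀ x ∈ Ioo (sSup S) b, D x < 0 := by
    intro x hx
    obtain ⟨m, hcm, hmx⟩ := exists_between hx.1
    have hm : m ∈ Ioo a b := ⟨hac.trans_lt hcm, hmx.trans hx.2⟩
    have hDm : D m ≤ 0 := by
      by_contra! h
      exact hcm.not_ge (le_csSup hS (Or.inr ⟨hm, h⟩))
    exact (hD hm ⟨hm.1.trans hmx, hx.2⟩ hmx).trans_le hDm
  refine ⟨sSup S, ⟨hac, hcb⟩, ?_, ?_⟩
  · refine strictMonoOn_of_deriv_pos (convex_Icc _ _) (hg.mono (Icc_subset_Icc le_rfl hcb)) ?_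
    rw [interior_Icc]
    intro x hx
    have hx' : x ∈ Ioo a b := ⟨hx.1, hx.2.trans_le hcb⟩
    rw [(hg' x hx').deriv]
    exact mul_pos (hp x hx') (hpos x hx)
  · refine strictAntiOn_of_deriv_neg (convex_Icc _ _) (hg.mono (Icc_subset_Icc hac le_rfl)) ?_
    rw [interior_Icc]
    intro x hx
    have hx' : x ∈ Ioo a b := ⟨hac.trans_lt hx.1, hx.2⟩
    rw [(hg' x hx').deriv]
    exact mul_neg_of_pos_of_neg (hp x hx') (hneg x hx)

theorem StrictMonoOn.apply_lt_of_strictAntiOn {α β : Type*} [LinearOrder α] [Preorder β]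
    {g : α → β} {a b c x : α} (h₁ : StrictMonoOn g (Icc a c)) (h₂ : StrictAntiOn g (Icc c b))
    (hx : x ∈ Icc a b) (hxc : x ≠ c) : g x < g c := by
  rcases hxc.lt_or_gt with h | h
  · exact h₁ ⟨hx.1, h.le⟩ ⟨hx.1.trans h.le, le_rfl⟩ h
  · exact h₂ ⟨le_rfl, h.le.trans hx.2⟩ ⟨h.le, hx.2⟩ h

section Geometry

variable {L d θ : ℝ}

lemma db_eq_sqrt (L d θ : ℝ) : db L d θ = √((d * sin θ) ^ 2 + (d * cos θ - L) ^ 2) := by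
  rw [db]
  congr 1
  linear_combination -d ^ 2 * sin_sq_add_cos_sq θ

lemma db_sq (L d θ : ℝ) : db L d θ ^ 2 = (d * sin θ) ^ 2 + (d * cos θ - L) ^ 2 := by
  rw [db_eq_sqrt, sq_sqrt (by positivity)]

lemma db_pos_of_lt_mul_cos (h : L < d * cos θ) : 0 < db L d θ := by
  rw [db_eq_sqrt]
  exact sqrt_pos.2 (add_pos_of_nonneg_of_pos (sq_nonneg _) (pow_pos (sub_pos.2 h) 2))

lemma db_radicand_pos (hL : 0 < L) (hd : L < d) (θ : ℝ) :
    0 < L ^ 2 + d ^ 2 - 2 * d * L * cos θ := by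
  nlinarith [cos_le_one θ, mul_pos (hL.trans hd) hL]

lemma db_pos (hL : 0 < L) (hd : L < d) (θ : ℝ) : 0 < db L d θ :=
  sqrt_pos.2 (db_radicand_pos hL hd θ)

lemma sub_mul_cos_pos (hL : 0 < L) (hd : L < d) (θ : ℝ) : 0 < d - L * cos θ := by
  nlinarith [cos_le_one θ]

lemma cos_arccos_div (hL : 0 < L) (hd : L < d) : cos (arccos (L / d)) = L / d :=
  cos_arccos (by linarith [div_pos hL (hL.trans hd)]) ((div_le_one (hL.trans hd)).2 hd.le)

lemma arccos_div_mem_Icc (hL : 0 < L) (hd : L < d) : arccos (L / d) ∈ Icc 0 (π / 2) :=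
  ⟨arccos_nonneg _, arccos_le_pi_div_two.2 (div_pos hL (hL.trans hd)).le⟩

lemma lt_mul_cos_iff (hL : 0 < L) (hd : L < d) (hθ : θ ∈ Icc 0 π) :
    L < d * cos θ ↔ θ < arccos (L / d) := by
  rw [← div_lt_iff₀' (hL.trans hd)]
  nth_rw 1 [← cos_arccos_div hL hd]
  exact strictAntiOn_cos.lt_iff_gt ⟨arccos_nonneg _, arccos_le_pi _⟩ hθ

lemma le_mul_cos_iff (hL : 0 < L) (hd : L < d) (hθ : θ ∈ Icc 0 π) :
    L ≤ d * cos θ ↔ θ ≤ arccos (L / d) := by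
  rw [← div_le_iff₀' (hL.trans hd)]
  nth_rw 1 [← cos_arccos_div hL hd]
  exact strictAntiOn_cos.le_iff_ge ⟨arccos_nonneg _, arccos_le_pi _⟩ hθ

lemma lt_mul_cos_of_mem_Ico (hL : 0 < L) (hd : L < d) (hθ : θ ∈ Ico 0 (arccos (L / d))) :
    L < d * cos θ :=
  (lt_mul_cos_iff hL hd ⟨hθ.1, hθ.2.le.trans (arccos_le_pi _)⟩).2 hθ.2

lemma Icc_arccos_subset_Icc_zero_pi {c : ℝ} : Icc (arccos c) (π / 2) ⊆ Icc 0 π :=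
  Icc_subset_Icc (arccos_nonneg _) (half_le_self pi_pos.le)

lemma Gfun_eq_mul (L d θ : ℝ) : Gfun L d θ = (d * cos θ - L) * (d - L * cos θ) := by
  rw [Gfun]; ring

lemma Gfun_arccos_div (hL : 0 < L) (hd : L < d) : Gfun L d (arccos (L / d)) = 0 := by
  rw [Gfun_eq_mul, cos_arccos_div hL hd, mul_div_cancel₀ _ (hL.trans hd).ne', sub_self, zero_mul]

end Geometry

section ElevationAngle

variable {L d θ x y : ℝ}

lemma sin_sq_mul_db_sq_sub (L d x y : ℝ) :
    sin x ^ 2 * db L d y ^ 2 - sin y ^ 2 * db L d x ^ 2 =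
      (cos y - cos x) * ((d * cos x - L) * (d - L * cos y) + (d * cos y - L) * (d - L * cos x)) := by
  rw [db_sq, db_sq]
  linear_combination (d * cos y - L) ^ 2 * sin_sq_add_cos_sq x -
    (d * cos x - L) ^ 2 * sin_sq_add_cos_sq y

lemma θb_lt_θb (hL : 0 < L) (hd : L < d) (hy : 0 ≤ sin y)
    (h : sin x ^ 2 * db L d y ^ 2 < sin y ^ 2 * db L d x ^ 2) : θb L d x < θb L d y := by
  have hd0 : 0 < d := hL.trans hd
  have hq : ∀ θ, d * sin θ / db L d θ ∈ Icc (-1 : ℝ) 1 := fun θ ↦ by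
    refine abs_le.1 ?_
    rw [abs_div, abs_of_pos (db_pos hL hd θ), div_le_one (db_pos hL hd θ), db_eq_sqrt]
    exact abs_le_sqrt (le_add_of_nonneg_right (sq_nonneg _))
  refine strictMonoOn_arcsin (hq x) (hq y) ?_
  refine lt_of_pow_lt_pow_left₀ 2 (div_nonneg (mul_nonneg hd0.le hy) (db_pos hL hd y).le) ?_
  rw [div_pow, div_pow, div_lt_div_iff₀ (pow_pos (db_pos hL hd x) 2) (pow_pos (db_pos hL hd y) 2)]
  nlinarith [mul_lt_mul_of_pos_left h (pow_pos hd0 2)]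

lemma strictMonoOn_θb (hL : 0 < L) (hd : L < d) :
    StrictMonoOn (θb L d) (Icc 0 (arccos (L / d))) := by
  intro x hx y hy hxy
  have hxπ : x ∈ Icc 0 π := Icc_subset_Icc_right (arccos_le_pi _) hx
  have hyπ : y ∈ Icc 0 π := Icc_subset_Icc_right (arccos_le_pi _) hy
  have hx' : L < d * cos x := lt_mul_cos_of_mem_Ico hL hd ⟨hx.1, hxy.trans_le hy.2⟩
  have hy' : L ≤ d * cos y := (le_mul_cos_iff hL hd hyπ).2 hy.2
  refine θb_lt_θb hL hd (sin_nonneg_of_nonneg_of_le_pi hyπ.1 hyπ.2) ?_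
  rw [← sub_neg, sin_sq_mul_db_sq_sub]
  refine mul_neg_of_neg_of_pos (sub_neg.2 (strictAntiOn_cos hxπ hyπ hxy)) ?_
  exact add_pos_of_pos_of_nonneg (mul_pos (sub_pos.2 hx') (sub_mul_cos_pos hL hd y))
    (mul_nonneg (sub_nonneg.2 hy') (sub_mul_cos_pos hL hd x).le)

lemma strictAntiOn_θb (hL : 0 < L) (hd : L < d) :
    StrictAntiOn (θb L d) (Icc (arccos (L / d)) (π / 2)) := by
  intro x hx y hy hxy
  have hxπ : x ∈ Icc 0 π := Icc_arccos_subset_Icc_zero_pi hx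
  have hyπ : y ∈ Icc 0 π := Icc_arccos_subset_Icc_zero_pi hy
  have hx' : d * cos x ≤ L := not_lt.1 (mt (lt_mul_cos_iff hL hd hxπ).1 hx.1.not_gt)
  have hy' : d * cos y < L := not_le.1 (mt (le_mul_cos_iff hL hd hyπ).1 (hx.1.trans_lt hxy).not_ge)
  refine θb_lt_θb hL hd (sin_nonneg_of_nonneg_of_le_pi hxπ.1 hxπ.2) ?_
  rw [← sub_pos, sin_sq_mul_db_sq_sub]
  refine mul_pos_of_neg_of_neg (sub_neg.2 (strictAntiOn_cos hxπ hyπ hxy)) ?_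
  exact add_neg_of_nonpos_of_neg (mul_nonpos_of_nonpos_of_nonneg (sub_nonpos.2 hx')
    (sub_mul_cos_pos hL hd y).le) (mul_neg_of_neg_of_pos (sub_neg.2 hy') (sub_mul_cos_pos hL hd x))

lemma θb_eq_arctan (h : L < d * cos θ) :
    θb L d θ = arctan (d * sin θ / (d * cos θ - L)) := by
  have hdb := db_pos_of_lt_mul_cos h
  have hc : 0 < d * cos θ - L := sub_pos.2 h
  have h1 : 1 - (d * sin θ / db L d θ) ^ 2 = ((d * cos θ - L) / db L d θ) ^ 2 := by
    rw [div_pow, div_pow, eq_div_iff (pow_pos hdb 2).ne', sub_mul, div_mul_cancel₀ _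
      (pow_pos hdb 2).ne', db_sq]
    ring
  have hq : d * sin θ / db L d θ ∈ Ioo (-1 : ℝ) 1 := by
    refine abs_lt.1 ((sq_lt_one_iff_abs_lt_one _).1 ?_)
    rw [← sub_pos, h1]
    exact pow_pos (div_pos hc hdb) 2
  rw [θb, arcsin_eq_arctan hq, h1, sqrt_sq (div_pos hc hdb).le, div_div_div_cancel_right₀ hdb.ne']

lemma hasDerivAt_θb (h : L < d * cos x) :
    HasDerivAt (θb L d) (d * (d - L * cos x) / db L d x ^ 2) x := by
  have hc : d * cos x - L ≠ 0 := (sub_pos.2 h).ne'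
  have hopen : IsOpen {θ | L < d * cos θ} := isOpen_lt continuous_const (by fun_prop)
  have hev : (fun θ ↦ arctan (d * sin θ / (d * cos θ - L))) =ᶠ[nhds x] θb L d :=
    Filter.eventually_of_mem (hopen.mem_nhds h) fun θ hθ ↦ (θb_eq_arctan hθ).symm
  have := (((hasDerivAt_sin x).const_mul d).div
    (((hasDerivAt_cos x).const_mul d).sub_const L) hc).arctan
  refine (this.congr_deriv ?_).congr_of_eventuallyEq hev.symm
  simp only [Pi.div_apply]
  rw [db_sq]
  field_simp
  linear_combination (d ^ 2 * (d * cos x - L) ^ 2 + d ^ 4 * sin x ^ 2) * sin_sq_add_cos_sq x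

end ElevationAngle

section Objective

variable {a b L ξL d : ℝ}

noncomputable def losProb (a b t : ℝ) : ℝ :=
  1 / (1 + a * exp (-b * ((180 / π) * t - a)))

lemma pb_eq_losProb (a b L d θ : ℝ) : pb a b L d θ = losProb a b (θb L d θ) := rfl

lemma losProb_pos (ha : 0 ≤ a) (t : ℝ) : 0 < losProb a b t := by
  unfold losProb; positivity

lemma strictMono_losProb (ha : 0 < a) (hb : 0 < b) : StrictMono (losProb a b) := by
  intro s t hst
  have hexp : exp (-b * ((180 / π) * t - a)) < exp (-b * ((180 / π) * s - a)) :=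
    exp_lt_exp.2 (mul_lt_mul_of_neg_left
      (sub_lt_sub_right (mul_lt_mul_of_pos_left hst (by positivity)) a) (neg_neg_of_pos hb))
  exact one_div_lt_one_div_of_lt (by positivity) (by gcongr)

lemma hasDerivAt_losProb (ha : 0 ≤ a) (t : ℝ) :
    HasDerivAt (losProb a b) (b * (180 / π) * losProb a b t * (1 - losProb a b t)) t := by
  have hE : 0 < 1 + a * exp (-b * ((180 / π) * t - a)) := by positivity
  have := ((((((hasDerivAt_id t).const_mul (180 / π)).sub_const a).const_mul (-b)).exp.const_mul
    a).const_add 1).inv hE.ne'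
  refine (this.congr_deriv ?_).congr_of_eventuallyEq (.of_forall fun s ↦ by simp [losProb])
  simp only [losProb, id]
  field_simp
  ring

lemma strictMonoOn_db (hL : 0 < L) (hd : L < d) : StrictMonoOn (db L d) (Icc 0 π) :=
  fun x hx y hy hxy ↦ sqrt_lt_sqrt (db_radicand_pos hL hd x).le
    (by nlinarith [strictAntiOn_cos hx hy hxy, mul_pos (hL.trans hd) hL])

lemma strictAntiOn_f (ha : 0 < a) (hb : 0 < b) (hL : 0 < L) (hξ : ξL < 0) (hd : L < d) :
    StrictAntiOn (f a b L ξL d) (Icc (arccos (L / d)) (π / 2)) := by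
  intro x hx y hy hxy
  have hdb : db L d x < db L d y := strictMonoOn_db hL hd (Icc_arccos_subset_Icc_zero_pi hx)
    (Icc_arccos_subset_Icc_zero_pi hy) hxy
  have hpb : pb a b L d y < pb a b L d x :=
    (strictMono_losProb ha hb).comp_strictAntiOn (strictAntiOn_θb hL hd) hx hy hxy
  exact mul_lt_mul'' (rpow_lt_rpow_of_neg (db_pos hL hd x) hdb hξ) hpb
    (rpow_nonneg (db_pos hL hd y).le _) (losProb_pos ha.le _).le

end Objective

section Slope

variable {a b L ξL d x : ℝ}

lemma strictMonoOn_sin_div (hL : 0 < L) (hd : L < d) :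
    StrictMonoOn (fun θ ↦ sin θ / (d - L * cos θ)) (Icc 0 (arccos (L / d))) := by
  refine strictMonoOn_of_deriv_pos (convex_Icc _ _) (Continuous.continuousOn ?_) ?_
  · exact continuous_sin.div (by fun_prop) fun θ ↦ (sub_mul_cos_pos hL hd θ).ne'
  rw [interior_Icc]
  intro x hx
  have hder : HasDerivAt (fun θ ↦ sin θ / (d - L * cos θ))
      ((d * cos x - L) / (d - L * cos x) ^ 2) x := by
    refine ((hasDerivAt_sin x).div (((hasDerivAt_cos x).const_mul L).const_sub d)
      (sub_mul_cos_pos hL hd x).ne').congr_deriv ?_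
    congr 1
    linear_combination -L * sin_sq_add_cos_sq x
  rw [hder.deriv]
  exact div_pos (sub_pos.2 (lt_mul_cos_of_mem_Ico hL hd (Ioo_subset_Ico_self hx))) (pow_pos (sub_mul_cos_pos hL hd x) 2)

/-- `d (log f) / d θb`, on the arc `θ ≤ arccos (L / d)` where `θb` increases with `θ`. -/
noncomputable def fSlope (a b L ξL d θ : ℝ) : ℝ :=
  b * (180 / π) * (1 - pb a b L d θ) + ξL * L * sin θ / (d - L * cos θ)

lemma strictAntiOn_fSlope (ha : 0 < a) (hb : 0 < b) (hL : 0 < L) (hξ : ξL < 0) (hd : L < d) :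
    StrictAntiOn (fSlope a b L ξL d) (Icc 0 (arccos (L / d))) := by
  intro x hx y hy hxy
  have hpb : pb a b L d x < pb a b L d y :=
    (strictMono_losProb ha hb).comp_strictMonoOn (strictMonoOn_θb hL hd) hx hy hxy
  have h1 : b * (180 / π) * (1 - pb a b L d y) < b * (180 / π) * (1 - pb a b L d x) :=
    mul_lt_mul_of_pos_left (by linarith) (by positivity)
  have h2 : ξL * L * (sin y / (d - L * cos y)) < ξL * L * (sin x / (d - L * cos x)) :=
    mul_lt_mul_of_neg_left (strictMonoOn_sin_div hL hd hx hy hxy) (mul_neg_of_neg_of_pos hξ hL)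
  simp only [fSlope, mul_div_assoc]
  linarith

lemma hasDerivAt_rpow_db (hL : 0 < L) (hd : L < d) :
    HasDerivAt (fun θ ↦ db L d θ ^ ξL) (db L d x ^ ξL * (ξL * d * L * sin x / db L d x ^ 2)) x := by
  have hdb := db_pos hL hd x
  have hu : HasDerivAt (fun θ ↦ L ^ 2 + d ^ 2 - 2 * d * L * cos θ) (2 * d * L * sin x) x := by
    simpa using ((hasDerivAt_cos x).const_mul (2 * d * L)).const_sub (L ^ 2 + d ^ 2)
  have := (hu.sqrt (db_radicand_pos hL hd x).ne').rpow_const (p := ξL) (Or.inl hdb.ne')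
  refine this.congr_deriv ?_
  rw [← db, rpow_sub_one hdb.ne']
  field_simp

lemma hasDerivAt_f (ha : 0 ≤ a) (hL : 0 < L) (hd : L < d) (h : L < d * cos x) :
    HasDerivAt (f a b L ξL d)
      (f a b L ξL d x * (d * (d - L * cos x) / db L d x ^ 2) * fSlope a b L ξL d x) x := by
  have := (hasDerivAt_rpow_db (ξL := ξL) hL hd).mul
    ((hasDerivAt_losProb (b := b) ha _).comp x (hasDerivAt_θb h))
  refine this.congr_deriv ?_
  have := sub_mul_cos_pos hL hd x
  have := db_pos hL hd x
  simp only [f, fSlope, pb_eq_losProb, Function.comp_apply]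
  field_simp
  ring

lemma f_pos (ha : 0 ≤ a) (hL : 0 < L) (hd : L < d) (θ : ℝ) : 0 < f a b L ξL d θ :=
  mul_pos (rpow_pos_of_pos (db_pos hL hd θ) _) (losProb_pos ha _)

lemma continuous_f (ha : 0 ≤ a) (hL : 0 < L) (hd : L < d) : Continuous (f a b L ξL d) := by
  have hdb : Continuous (db L d) := by unfold db; fun_prop
  have hθb : Continuous (θb L d) :=
    continuous_arcsin.comp ((continuous_const.mul continuous_sin).div hdb
      fun θ ↦ (db_pos hL hd θ).ne')
  have hpb : Continuous (losProb a b) :=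
    continuous_iff_continuousAt.2 fun t ↦ (hasDerivAt_losProb (b := b) ha t).continuousAt
  exact (hdb.rpow_const fun θ ↦ Or.inl (db_pos hL hd θ).ne').mul (hpb.comp hθb)

end Slope

/-- Lemma 3: for fixed `d > L`, `θ ↦ f(d, θ)` is strictly decreasing on
`[arccos(L/d), π/2]`, has a unique global maximizer `θ°` over `[0, π/2]` lying in
`[0, arccos(L/d)]`, and `G(arccos(L/d)) = 0`. -/
theorem stmt_11 (a b L ξL d : ℝ) (ha : 0 < a) (hb : 0 < b) (hL : 0 < L)
    (hξ : ξL < 0) (hd : L < d) :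
    StrictAntiOn (fun θ => f a b L ξL d θ)
      (Set.Icc (Real.arccos (L / d)) (Real.pi / 2)) ∧
    (∃ θ0 : ℝ, θ0 ∈ Set.Icc 0 (Real.arccos (L / d)) ∧
      ∀ θ ∈ Set.Icc 0 (Real.pi / 2), θ ≠ θ0 → f a b L ξL d θ < f a b L ξL d θ0) ∧
    Gfun L d (Real.arccos (L / d)) = 0 := by
  have hT := arccos_div_mem_Icc hL hd
  have hdecr_right := strictAntiOn_f ha hb hL hξ hd
  have hp : ∀ x, 0 < f a b L ξL d x * (d * (d - L * cos x) / db L d x ^ 2) := fun x ↦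
    mul_pos (f_pos ha.le hL hd x)
      (div_pos (mul_pos (hL.trans hd) (sub_mul_cos_pos hL hd x)) (pow_pos (db_pos hL hd x) 2))
  obtain ⟨θ0, hθ0, hincr, hdecr_mid⟩ := exists_strictMonoOn_strictAntiOn_of_hasDerivAt hT.1
    (continuous_f ha.le hL hd).continuousOn (fun x _ ↦ hp x)
    ((strictAntiOn_fSlope ha hb hL hξ hd).mono Ioo_subset_Icc_self)
    (fun x hx ↦ hasDerivAt_f ha.le hL hd (lt_mul_cos_of_mem_Ico hL hd (Ioo_subset_Ico_self hx)))
  have hdecr : StrictAntiOn (f a b L ξL d) (Icc θ0 (π / 2)) := by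
    rw [← Icc_union_Icc_eq_Icc hθ0.2 hT.2]
    exact hdecr_mid.union hdecr_right (isGreatest_Icc hθ0.2) (isLeast_Icc hT.2)
  exact ⟨hdecr_right, ⟨θ0, hθ0, fun θ hθ hne ↦ hincr.apply_lt_of_strictAntiOn hdecr hθ hne⟩,
    Gfun_arccos_div hL hd⟩
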